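/- arXiv:1111.5161 — 6 statements merged into one kernel-verified Lean document; each statement's English description precedes it below -/
import Mathlib

section
/- Let p > 1 and h > 0. For each c > 0 define χ(z,c) = z² − c z − 1 + p e^{−z c h}. If for some c₀ > 0 the equation χ(z,c₀) = 0 has a double positive root (i.e. there exists λ > 0 with χ(λ,c₀) = 0 and ∂χ/∂z(λ,c₀) = 0), then for every c > c₀ the equation χ(z,c) = 0 has at least two distinct positive real roots. -/
open Real

/-- Let p > 1 and h > 0 and χ(z,c) = z² − cz − 1 + p e^{−zch}.
If for some c₀ > 0 the equation χ(z,c₀) = 0 has a double positive root, then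
for every c > c₀ the equation χ(z,c) = 0 has at least two distinct positive
real roots. -/
theorem stmt_1 (p h : ℝ) (hp : 1 < p) (hh : 0 < h)
    (χ : ℝ → ℝ → ℝ)
    (hχ : χ = fun z c => z ^ 2 - c * z - 1 + p * Real.exp (-(z * c * h)))
    (c₀ : ℝ) (hc₀ : 0 < c₀)
    (hdouble : ∃ l > (0 : ℝ), χ l c₀ = 0 ∧ deriv (fun z => χ z c₀) l = 0) :
    ∀ c > c₀, ∃ z₁ z₂ : ℝ, 0 < z₁ ∧ z₁ < z₂ ∧ χ z₁ c = 0 ∧ χ z₂ c = 0 := by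
  subst hχ
  obtain ⟨l, hl, hroot, -⟩ := hdouble
  intro c hc
  have hp0 : (0:ℝ) < p := lt_trans one_pos hp
  have hc' : 0 < c := lt_trans hc₀ hc
  -- χ(l, c) < 0
  have hlc : l ^ 2 - c * l - 1 + p * Real.exp (-(l * c * h)) < 0 := by
    have hexp : Real.exp (-(l * c * h)) < Real.exp (-(l * c₀ * h)) := by
      apply Real.exp_lt_exp.mpr
      have : l * c₀ * h < l * c * h := by
        apply mul_lt_mul_of_pos_right _ hh
        exact mul_lt_mul_of_pos_left hc hl
      linarith
    have hcl : c₀ * l < c * l := mul_lt_mul_of_pos_right hc hl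
    have := hroot
    simp only at this
    nlinarith [this, mul_lt_mul_of_pos_left hexp hp0]
  set f : ℝ → ℝ := fun z => z ^ 2 - c * z - 1 + p * Real.exp (-(z * c * h)) with hf
  have hcont : Continuous f := by fun_prop
  have hf0 : 0 < f 0 := by simp [hf]; linarith
  -- large endpoint
  set M : ℝ := max (c + 2) (l + 1) with hM
  have hMc : c + 2 ≤ M := le_max_left _ _
  have hMl : l + 1 ≤ M := le_max_right _ _
  have hM0 : 0 < M := lt_of_lt_of_le (by linarith) hMc
  have hfM : 0 < f M := by
    have h1 : M * (c + 2) ≤ M * M := mul_le_mul_of_nonneg_left hMc hM0.le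
    have h2 : 0 < Real.exp (-(M * c * h)) := Real.exp_pos _
    have : 0 < M ^ 2 - c * M - 1 := by nlinarith
    simp only [hf]
    nlinarith [mul_pos hp0 h2]
  -- root in (0, l)
  obtain ⟨z₁, hz₁mem, hz₁⟩ : ∃ z₁ ∈ Set.Ioo (0:ℝ) l, f z₁ = 0 := by
    have := intermediate_value_Ioo' hl.le hcont.continuousOn
      (a := (0:ℝ)) (b := l)
    have hmem : (0:ℝ) ∈ Set.Ioo (f l) (f 0) := ⟨hlc, hf0⟩
    obtain ⟨z, hz, hfz⟩ := this hmem
    exact ⟨z, hz, hfz⟩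
  -- root in (l, M)
  obtain ⟨z₂, hz₂mem, hz₂⟩ : ∃ z₂ ∈ Set.Ioo l M, f z₂ = 0 := by
    have hlM : l ≤ M := by linarith
    have := intermediate_value_Ioo hlM hcont.continuousOn
    have hmem : (0:ℝ) ∈ Set.Ioo (f l) (f M) := ⟨hlc, hfM⟩
    obtain ⟨z, hz, hfz⟩ := this hmem
    exact ⟨z, hz, hfz⟩
  exact ⟨z₁, z₂, hz₁mem.1, lt_trans hz₁mem.2 hz₂mem.1, hz₁, hz₂⟩
end

section
/- Suppose g : [0,κ] → ℝ is twice continuously differentiable, g(0) = 0, and for every δ ∈ (0,1) there exist a > 0, α ≥ 0, β ≥ 0 with α + β > 0 such that for all θ ∈ (0,δ] and v ∈ [0,κ], (1 − θ) g(v) − g((1 − θ) v) ≤ − a θ κ^α v^β. Then g'(v) · v ≤ g(v) − a κ^α v^β for all v ∈ [0,κ]; in particular g'(v) < g(v)/v for all v ∈ (0,κ]. -/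
/-!
Put `F θ = (1 - θ) g(v) - g((1 - θ) v) + a θ κ^α v^β`. Condition (A3) says `F ≤ 0 = F 0` for
small `θ > 0`, so `0` is a maximum of `F` on `[0, δ]` and the one-sided derivative
`F'(0) = -g(v) + g'(v) v + a κ^α v^β` is nonpositive.
-/

open Set

theorem IsLocalMaxOn.hasDerivWithinAt_Icc_left_nonpos {f : ℝ → ℝ} {a b f' : ℝ} (hab : a < b)
    (h : IsLocalMaxOn f (Icc a b) a) (hf : HasDerivWithinAt f f' (Icc a b) a) : f' ≤ 0 := by
  have hcone : b - a ∈ posTangentConeAt (Icc a b) a :=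
    sub_mem_posTangentConeAt_of_segment_subset (segment_eq_Icc hab.le).subset
  have hprod : (b - a) * f' ≤ 0 := by
    simpa using h.hasFDerivWithinAt_nonpos hf.hasFDerivWithinAt hcone
  exact nonpos_of_mul_nonpos_right hprod (sub_pos.mpr hab)

theorem HasDerivWithinAt.mul_le_sub_of_scaling_bound {g : ℝ → ℝ} {s : Set ℝ} {g' v c δ : ℝ}
    (hδ : 0 < δ) (hg : HasDerivWithinAt g g' s v)
    (hmaps : MapsTo (fun θ => (1 - θ) * v) (Icc 0 δ) s)
    (hbound : ∀ θ ∈ Ioc 0 δ, (1 - θ) * g v - g ((1 - θ) * v) ≤ -(c * θ)) :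
    g' * v ≤ g v - c := by
  set F : ℝ → ℝ := fun θ => (1 - θ) * g v - g ((1 - θ) * v) + c * θ
  have hscale : HasDerivWithinAt (fun θ : ℝ => (1 - θ) * v) (-v) (Icc 0 δ) 0 := by
    simpa using (((hasDerivAt_id (0 : ℝ)).const_sub 1).mul_const v).hasDerivWithinAt
  have hF : HasDerivWithinAt F (-g v + g' * v + c) (Icc 0 δ) 0 := by
    have hlin : HasDerivWithinAt (fun θ : ℝ => (1 - θ) * g v) (-g v) (Icc 0 δ) 0 := by
      simpa using (((hasDerivAt_id (0 : ℝ)).const_sub 1).mul_const (g v)).hasDerivWithinAt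
    have hcomp : HasDerivWithinAt (fun θ => g ((1 - θ) * v)) (g' * -v) (Icc 0 δ) 0 :=
      HasDerivWithinAt.comp (h := fun θ : ℝ => (1 - θ) * v) 0 (by simpa using hg) hscale hmaps
    exact ((hlin.sub hcomp).add
      ((hasDerivAt_id (0 : ℝ)).const_mul c).hasDerivWithinAt).congr_deriv (by ring)
  have hmax : IsLocalMaxOn F (Icc 0 δ) 0 := by
    refine IsMaxOn.localize fun θ hθ => ?_
    show F θ ≤ F 0
    rcases hθ.1.eq_or_lt with rfl | hθ0
    · exact le_rfl
    · have := hbound θ ⟨hθ0, hθ.2⟩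
      simp only [F, sub_zero, one_mul, mul_zero, add_zero, sub_self]
      linarith
  linarith [hmax.hasDerivWithinAt_Icc_left_nonpos hδ hF]

theorem stmt_2_general (κ : ℝ) (hκ : 0 < κ) (g : ℝ → ℝ)
    (hg : ContDiffOn ℝ 2 g (Set.Icc 0 κ))
    (hA3 : ∀ δ ∈ Set.Ioo (0 : ℝ) 1, ∃ a > (0 : ℝ), ∃ α ≥ (0 : ℝ), ∃ β ≥ (0 : ℝ),
      0 < α + β ∧ ∀ θ ∈ Set.Ioc (0 : ℝ) δ, ∀ v ∈ Set.Icc (0 : ℝ) κ,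
        (1 - θ) * g v - g ((1 - θ) * v) ≤ -(a * θ * κ ^ α * v ^ β)) :
    (∃ a > (0 : ℝ), ∃ α ≥ (0 : ℝ), ∃ β ≥ (0 : ℝ), 0 < α + β ∧
      ∀ v ∈ Set.Icc (0 : ℝ) κ,
        derivWithin g (Set.Icc 0 κ) v * v ≤ g v - a * κ ^ α * v ^ β) ∧
    (∀ v ∈ Set.Ioc (0 : ℝ) κ, derivWithin g (Set.Icc 0 κ) v < g v / v) := by
  obtain ⟨a, ha, α, hα, β, hβ, hαβ, hA3⟩ := hA3 (1 / 2) (by norm_num)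
  have hmain : ∀ v ∈ Icc (0 : ℝ) κ,
      derivWithin g (Icc 0 κ) v * v ≤ g v - a * κ ^ α * v ^ β := by
    intro v hv
    have hmaps : MapsTo (fun θ => (1 - θ) * v) (Icc 0 (1 / 2)) (Icc 0 κ) := fun θ hθ =>
      ⟨by nlinarith [hθ.2, hv.1], by nlinarith [hθ.1, hv.1, hv.2]⟩
    refine ((hg.differentiableOn two_ne_zero v hv).hasDerivWithinAt).mul_le_sub_of_scaling_bound
      (by norm_num) hmaps fun θ hθ => ?_
    linarith [hA3 θ hθ v hv]
  refine ⟨⟨a, ha, α, hα, β, hβ, hαβ, hmain⟩, fun v ⟨hv0, hvκ⟩ => ?_⟩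
  have hdeficit : 0 < a * κ ^ α * v ^ β := by positivity
  rw [lt_div_iff₀ hv0]
  linarith [hmain v ⟨hv0.le, hvκ⟩]

/-- Condition (A3) implies g'(v)·v ≤ g(v) − aκ^α v^β on [0,κ],
and in particular g'(v) < g(v)/v on (0,κ]. -/
theorem stmt_2 (κ : ℝ) (hκ : 0 < κ) (g : ℝ → ℝ)
    (hg : ContDiffOn ℝ 2 g (Set.Icc 0 κ)) (hg0 : g 0 = 0)
    (hA3 : ∀ δ ∈ Set.Ioo (0 : ℝ) 1, ∃ a > (0 : ℝ), ∃ α ≥ (0 : ℝ), ∃ β ≥ (0 : ℝ),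
      0 < α + β ∧ ∀ θ ∈ Set.Ioc (0 : ℝ) δ, ∀ v ∈ Set.Icc (0 : ℝ) κ,
        (1 - θ) * g v - g ((1 - θ) * v) ≤ -(a * θ * κ ^ α * v ^ β)) :
    (∃ a > (0 : ℝ), ∃ α ≥ (0 : ℝ), ∃ β ≥ (0 : ℝ), 0 < α + β ∧
      ∀ v ∈ Set.Icc (0 : ℝ) κ,
        derivWithin g (Set.Icc 0 κ) v * v ≤ g v - a * κ ^ α * v ^ β) ∧
    (∀ v ∈ Set.Ioc (0 : ℝ) κ, derivWithin g (Set.Icc 0 κ) v < g v / v) :=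
  stmt_2_general κ hκ g hg hA3
end

section
/- Let g : [0,∞) → [0,∞) be increasing with g(x) < x for all x > κ and g(κ) = κ, and let φ : ℝ → ℝ be a bounded C¹ solution of c φ'(t) = D[φ(t+1) + φ(t−1) − 2φ(t)] − φ(t) + Σ_{k∈ℤ} β(k) g(φ(t − k − c h)) with D > 0, β(k) ≥ 0, Σ β(k) = 1, satisfying 0 < φ(t) for all t. If φ attains its supremum M := sup φ at a point s₀ ∈ ℝ (with s₀ the leftmost such point) and M ≥ κ, then a contradiction follows; hence if sup φ is attained, sup φ < κ. -/
open Real Set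

/-- A positive bounded C¹ solution of the nonlocal lattice wave
equation cannot attain a supremum M ≥ κ at a leftmost point; hence any attained
supremum is < κ. -/
theorem stmt_9 (κ D c h : ℝ) (hκ : 0 < κ) (hD : 0 < D) (hh : 0 ≤ h)
    (g : ℝ → ℝ) (hgmono : MonotoneOn g (Set.Ici (0 : ℝ)))
    (hgκ : g κ = κ) (hglt : ∀ x, κ < x → g x < x)
    (β : ℤ → ℝ) (hβ : ∀ k, 0 ≤ β k) (hβsum : Summable β) (hβ1 : ∑' k : ℤ, β k = 1)
    (φ : ℝ → ℝ) (hφdiff : Differentiable ℝ φ)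
    (hφbdd : ∃ M, ∀ t, |φ t| ≤ M)
    (hφpos : ∀ t, 0 < φ t)
    (hsum : ∀ t, Summable (fun k : ℤ => β k * g (φ (t - (k : ℝ) - c * h))))
    (heq : ∀ t, c * deriv φ t =
      D * (φ (t + 1) + φ (t - 1) - 2 * φ t) - φ t +
        ∑' k : ℤ, β k * g (φ (t - (k : ℝ) - c * h)))
    (s₀ : ℝ) (hmax : ∀ t, φ t ≤ φ s₀) (hleft : ∀ s, s < s₀ → φ s < φ s₀)
    (hM : κ ≤ φ s₀) :
    False := by
  set M := φ s₀ with hMdef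
  -- derivative vanishes at the global max
  have hloc : IsLocalMax φ s₀ := Filter.Eventually.of_forall hmax
  have hd : deriv φ s₀ = 0 := hloc.deriv_eq_zero
  -- g M ≤ M
  have hgM : g M ≤ M := by
    rcases eq_or_lt_of_le hM with h1 | h1
    · rw [← h1, hgκ]
    · exact le_of_lt (hglt M h1)
  -- tsum bound
  have hsum2 : Summable (fun k : ℤ => β k * g M) := hβsum.mul_right _
  have hts : (∑' k : ℤ, β k * g (φ (s₀ - (k : ℝ) - c * h))) ≤ g M := by
    calc (∑' k : ℤ, β k * g (φ (s₀ - (k : ℝ) - c * h)))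
        ≤ ∑' k : ℤ, β k * g M := by
          refine Summable.tsum_le_tsum (fun k => ?_) (hsum s₀) hsum2
          exact mul_le_mul_of_nonneg_left
            (hgmono (le_of_lt (hφpos _)) (le_of_lt (lt_of_lt_of_le hκ hM))
              (hmax _)) (hβ k)
      _ = g M := by rw [tsum_mul_right, hβ1, one_mul]
  -- discrete Laplacian strictly negative
  have h1 : φ (s₀ + 1) ≤ M := hmax _
  have h2 : φ (s₀ - 1) < M := hleft _ (by linarith)
  have hlap : D * (φ (s₀ + 1) + φ (s₀ - 1) - 2 * M) < 0 :=
    mul_neg_of_pos_of_neg hD (by linarith)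
  have := heq s₀
  rw [hd, mul_zero] at this
  linarith
end

section
/- Let g : [0,∞) → [0,∞) be strictly increasing and differentiable with g'(s) ≤ 1 for all s ∈ [κ−σ, κ] (some σ > 0). Let c > 0, h ≥ 0, and let φ, ψ : ℝ → (0,κ) be C² solutions of u''(t) − c u'(t) − u(t) + g(u(t − ch)) = 0 with φ(−∞)=ψ(−∞)=0, φ(+∞)=ψ(+∞)=κ. Suppose ψ(t) ≥ φ(t) for all t ∈ ℝ and there exists T with φ(T) = ψ(T) and ψ(T−ch) > φ(T−ch). Then evaluating the equation difference at T gives a contradiction; hence if ψ ≥ φ everywhere and ψ(t) > φ(t) for all t < T, then ψ(t) > φ(t) for all t ∈ ℝ. -/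
/-!
The difference `w = ψ - φ` is nonnegative and, since `g` is monotone, a supersolution:
`w'' - c w' - w = -(g (ψ (t - c h)) - g (φ (t - c h))) ≤ 0`. For such `w` a Hopf-type
barrier argument gives a strong minimum principle: if `w (t₁) > 0` and `t₁ < t₀`, then
`v = w - ε (exp (t₀ - t) - 1)`, with `ε` chosen so that `v (t₁) = 0`, is still a supersolution,
hence `v ≥ 0` on `[t₁, t₀]`; if `w (t₀) = 0`, then `t₀` minimizes `w`, so `v' (t₀) = ε > 0`
and `v` is negative just left of `t₀`. Since `w > 0` on `(-∞, T)`, `w` vanishes nowhere.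
This also covers `h = 0`, where the delayed term gives no strict inequality at `t₀`.
-/

open Real Set Filter Topology

theorem IsLocalMin.deriv_deriv_nonneg {f : ℝ → ℝ} {a : ℝ} (hf : IsLocalMin f a)
    (hc : ContinuousAt f a) : 0 ≤ deriv (deriv f) a := by
  by_contra! hneg
  -- a negative second derivative makes `a` also a local maximum, so `f` is locally constant
  have hconst : f =ᶠ[𝓝 a] fun _ => f a :=
    (hf.and (isLocalMax_of_deriv_deriv_neg hneg hf.deriv_eq_zero hc)).mono
      fun x hx => le_antisymm hx.2 hx.1
  have hderiv : deriv f =ᶠ[𝓝 a] fun _ => 0 :=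
    hconst.eventuallyEq_nhds.mono fun x hx => by simp [hx.deriv_eq]
  exact hneg.ne (by simp [hderiv.deriv_eq])

theorem nonneg_of_supersolution_of_nonneg_endpoints {c a b : ℝ} {v : ℝ → ℝ}
    (hv : ContinuousOn v (Icc a b))
    (hsuper : ∀ t ∈ Ioo a b, deriv (deriv v) t - c * deriv v t - v t ≤ 0)
    (ha : 0 ≤ v a) (hb : 0 ≤ v b) : ∀ t ∈ Icc a b, 0 ≤ v t := by
  intro t ht
  obtain ⟨m, hm, hmin⟩ := isCompact_Icc.exists_isMinOn ⟨t, ht⟩ hv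
  refine le_trans ?_ (hmin ht)
  by_contra! hneg
  have hma : a < m := hm.1.lt_of_ne (by rintro rfl; linarith)
  have hmb : m < b := hm.2.lt_of_ne (by rintro rfl; linarith)
  have hnhds : Icc a b ∈ 𝓝 m := Icc_mem_nhds hma hmb
  have hloc : IsLocalMin v m := hmin.isLocalMin hnhds
  have hsecond := hloc.deriv_deriv_nonneg (hv.continuousAt hnhds)
  have hsuper_m := hsuper m ⟨hma, hmb⟩
  rw [hloc.deriv_eq_zero] at hsuper_m
  linarith

theorem pos_of_supersolution_of_pos_of_lt {c t₁ t₀ : ℝ} {w : ℝ → ℝ} (hc : 0 ≤ c)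
    (hw : Differentiable ℝ w) (hw' : Differentiable ℝ (deriv w))
    (hsuper : ∀ t, deriv (deriv w) t - c * deriv w t - w t ≤ 0) (hnonneg : ∀ t, 0 ≤ w t)
    (ht₁ : 0 < w t₁) (ht : t₁ < t₀) : 0 < w t₀ := by
  refine (hnonneg t₀).lt_of_ne' fun hzero => ?_
  set ε := w t₁ / (exp (t₀ - t₁) - 1)
  have hε : 0 < ε := div_pos ht₁ (by simpa [sub_pos] using ht)
  set v : ℝ → ℝ := fun t => w t - ε * (exp (t₀ - t) - 1)
  have hexp (t : ℝ) : HasDerivAt (fun s => exp (t₀ - s)) (-exp (t₀ - t)) t := by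
    simpa using ((hasDerivAt_id t).const_sub t₀).exp
  have hv (t : ℝ) : HasDerivAt v (deriv w t + ε * exp (t₀ - t)) t :=
    ((hw t).hasDerivAt.sub (((hexp t).sub_const 1).const_mul ε)).congr_deriv (by ring)
  have hv' (t : ℝ) : HasDerivAt (deriv v) (deriv (deriv w) t - ε * exp (t₀ - t)) t := by
    rw [show deriv v = fun t => deriv w t + ε * exp (t₀ - t) from funext fun t => (hv t).deriv]
    exact ((hw' t).hasDerivAt.add ((hexp t).const_mul ε)).congr_deriv (by ring)
  have hvt₁ : v t₁ = 0 := by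
    have : exp (t₀ - t₁) - 1 ≠ 0 := by simpa [sub_eq_zero] using ht.ne'
    simp only [v, ε]
    field_simp
    ring
  have hvt₀ : v t₀ = 0 := by simp [v, hzero]
  have hvnonneg : ∀ t ∈ Icc t₁ t₀, 0 ≤ v t := by
    refine nonneg_of_supersolution_of_nonneg_endpoints (c := c)
      (fun t _ => (hv t).continuousAt.continuousWithinAt) (fun t _ => ?_) hvt₁.ge hvt₀.ge
    rw [(hv t).deriv, (hv' t).deriv]
    linarith [hsuper t, mul_nonneg hc (mul_pos hε (exp_pos (t₀ - t))).le]
  have hmin : IsLocalMin w t₀ := Eventually.of_forall fun t => hzero ▸ hnonneg t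
  have hderiv : 0 < deriv v t₀ := by simpa [(hv t₀).deriv, hmin.deriv_eq_zero] using hε
  obtain ⟨t, hsign, htI⟩ :=
    (((eventually_nhdsWithin_sign_eq_of_deriv_pos hderiv hvt₀).filter_mono
      nhdsWithin_le_nhds).and (Ioo_mem_nhdsLT ht)).exists
  rw [sign_eq_neg_one_iff.mpr (sub_neg.mpr htI.2), sign_eq_neg_one_iff] at hsign
  linarith [hvnonneg t (Ioo_subset_Icc_self htI)]

theorem stmt_11_general (κ c h : ℝ) (hc : 0 < c)
    (g : ℝ → ℝ) (hgsm : StrictMonoOn g (Set.Ici (0 : ℝ)))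
    (φ ψ : ℝ → ℝ) (hφC2 : ContDiff ℝ 2 φ) (hψC2 : ContDiff ℝ 2 ψ)
    (hφrange : ∀ t, φ t ∈ Set.Ioo (0 : ℝ) κ) (hψrange : ∀ t, ψ t ∈ Set.Ioo (0 : ℝ) κ)
    (hφeq : ∀ t, deriv (deriv φ) t - c * deriv φ t - φ t + g (φ (t - c * h)) = 0)
    (hψeq : ∀ t, deriv (deriv ψ) t - c * deriv ψ t - ψ t + g (ψ (t - c * h)) = 0)
    (hge : ∀ t, φ t ≤ ψ t)
    (T : ℝ) (hlt : ∀ t, t < T → φ t < ψ t) :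
    ∀ t, φ t < ψ t := by
  have hφ := hφC2.differentiable (by norm_num)
  have hψ := hψC2.differentiable (by norm_num)
  have hderiv : deriv (fun t => ψ t - φ t) = fun t => deriv ψ t - deriv φ t :=
    funext fun t => deriv_sub (hψ t) (hφ t)
  have hderiv2 : deriv (deriv fun t => ψ t - φ t) =
      fun t => deriv (deriv ψ) t - deriv (deriv φ) t := by
    rw [hderiv]
    exact funext fun t =>
      deriv_sub (hψC2.differentiable_deriv_two t) (hφC2.differentiable_deriv_two t)
  have hsuper (t : ℝ) : deriv (deriv fun t => ψ t - φ t) t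
      - c * deriv (fun t => ψ t - φ t) t - (ψ t - φ t) ≤ 0 := by
    have hmono := hgsm.monotoneOn (hφrange (t - c * h)).1.le (hψrange (t - c * h)).1.le
      (hge (t - c * h))
    rw [hderiv2, hderiv]
    linarith [hφeq t, hψeq t]
  intro t
  have hpos := pos_of_supersolution_of_pos_of_lt (w := fun t => ψ t - φ t) hc.le (hψ.sub hφ)
    (by rw [hderiv]; exact hψC2.differentiable_deriv_two.sub hφC2.differentiable_deriv_two)
    hsuper (fun t => sub_nonneg.mpr (hge t))
    (sub_pos.mpr (hlt (min T t - 1) (by linarith [min_le_left T t])))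
    (by linarith [min_le_right T t] : min T t - 1 < t)
  exact sub_pos.mp hpos

/-- (Sliding lemma, case a_* = 0.) If φ, ψ are wavefront profiles
of u'' − cu' − u + g(u(·−ch)) = 0 with values in (0,κ), connecting 0 to κ,
g strictly increasing with g' ≤ 1 on [κ−σ,κ], ψ ≥ φ everywhere and ψ > φ on
(−∞,T), then ψ > φ everywhere. -/
theorem stmt_11 (κ σ c h : ℝ) (hκ : 0 < κ) (hσ : 0 < σ) (hc : 0 < c) (hh : 0 ≤ h)
    (g : ℝ → ℝ) (hgsm : StrictMonoOn g (Set.Ici (0 : ℝ)))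
    (hgdiff : ∀ s ∈ Set.Icc (κ - σ) κ, DifferentiableAt ℝ g s)
    (hg'le : ∀ s ∈ Set.Icc (κ - σ) κ, deriv g s ≤ 1)
    (φ ψ : ℝ → ℝ) (hφC2 : ContDiff ℝ 2 φ) (hψC2 : ContDiff ℝ 2 ψ)
    (hφrange : ∀ t, φ t ∈ Set.Ioo (0 : ℝ) κ) (hψrange : ∀ t, ψ t ∈ Set.Ioo (0 : ℝ) κ)
    (hφeq : ∀ t, deriv (deriv φ) t - c * deriv φ t - φ t + g (φ (t - c * h)) = 0)
    (hψeq : ∀ t, deriv (deriv ψ) t - c * deriv ψ t - ψ t + g (ψ (t - c * h)) = 0)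
    (hφbot : Filter.Tendsto φ Filter.atBot (nhds 0))
    (hφtop : Filter.Tendsto φ Filter.atTop (nhds κ))
    (hψbot : Filter.Tendsto ψ Filter.atBot (nhds 0))
    (hψtop : Filter.Tendsto ψ Filter.atTop (nhds κ))
    (hge : ∀ t, φ t ≤ ψ t)
    (T : ℝ) (hlt : ∀ t, t < T → φ t < ψ t) :
    ∀ t, φ t < ψ t :=
  stmt_11_general κ c h hc g hgsm φ ψ hφC2 hψC2 hφrange hψrange hφeq hψeq hge T hlt
end

section
/- Let φ, ψ : ℝ → (0,κ) be continuous with φ(−∞) = ψ(−∞) = 0, φ(+∞) = ψ(+∞) = κ, and suppose φ is strictly increasing on some interval (−∞, ρ) and ψ is strictly increasing on (−∞, ρ'). Define, for τ ≥ 0, T(τ) := sup{ T : ψ(t+τ) > φ(t) for all t < T } and assume T(τ) is finite with φ(T(τ)) = ψ(T(τ)+τ) for each τ ≥ 0. Then T(τ) → +∞ as τ → +∞. -/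
open Real Set Filter

/-- If φ, ψ are continuous profiles with values in (0,κ),
connecting 0 to κ, eventually strictly increasing near −∞, and T(τ) is a finite
contact point: φ < ψ(·+τ) on (−∞, T(τ)) with equality at T(τ), then
T(τ) → +∞ as τ → +∞. -/
theorem stmt_12 (κ ρ ρ' : ℝ) (hκ : 0 < κ)
    (φ ψ : ℝ → ℝ) (hφc : Continuous φ) (hψc : Continuous ψ)
    (hφrange : ∀ t, φ t ∈ Set.Ioo (0 : ℝ) κ) (hψrange : ∀ t, ψ t ∈ Set.Ioo (0 : ℝ) κ)
    (hφbot : Filter.Tendsto φ Filter.atBot (nhds 0))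
    (hφtop : Filter.Tendsto φ Filter.atTop (nhds κ))
    (hψbot : Filter.Tendsto ψ Filter.atBot (nhds 0))
    (hψtop : Filter.Tendsto ψ Filter.atTop (nhds κ))
    (hφmono : StrictMonoOn φ (Set.Iio ρ)) (hψmono : StrictMonoOn ψ (Set.Iio ρ'))
    (T : ℝ → ℝ)
    (hT : ∀ τ ≥ (0 : ℝ), (∀ t, t < T τ → φ t < ψ (t + τ)) ∧ φ (T τ) = ψ (T τ + τ)) :
    Filter.Tendsto T Filter.atTop Filter.atTop := by
  -- Step 1: a positive lower bound δ for ψ on [ρ', ∞).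
  have hhalf : κ / 2 < κ := by linarith
  have hB : ∀ᶠ s in atTop, κ / 2 < ψ s := hψtop.eventually (eventually_gt_nhds hhalf)
  obtain ⟨B, hBmem⟩ := eventually_atTop.1 hB
  set B' : ℝ := max B ρ' with hB'def
  have hcpt : IsCompact (Set.Icc ρ' B') := isCompact_Icc
  have hne : (Set.Icc ρ' B').Nonempty := ⟨ρ', le_refl _, le_max_right _ _⟩
  obtain ⟨x, hxmem, hxmin⟩ := hcpt.exists_isMinOn hne hψc.continuousOn
  set δ : ℝ := min (κ / 2) (ψ x) with hδdef
  have hδpos : 0 < δ := lt_min (by linarith) (hψrange x).1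
  have hψlb : ∀ s, ρ' ≤ s → δ ≤ ψ s := by
    intro s hs
    rcases le_or_gt s B' with h | h
    · exact le_trans (min_le_right _ _) (hxmin ⟨hs, h⟩)
    · exact le_trans (min_le_left _ _)
        (le_of_lt (hBmem s (le_trans (le_max_left _ _) h.le)))
  -- Step 2: L with φ < δ on (−∞, L].
  have hL : ∀ᶠ t in atBot, φ t < δ := hφbot.eventually (eventually_lt_nhds hδpos)
  obtain ⟨L, hLmem⟩ := eventually_atBot.1 hL
  set L1 : ℝ := min L (min (T 0) ρ') with hL1def
  -- Step 3: uniform lower bound T τ ≥ L1 for τ ≥ 0.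
  have hlb : ∀ τ, 0 ≤ τ → L1 ≤ T τ := by
    intro τ hτ
    by_contra hcon
    push_neg at hcon
    obtain ⟨hlt, heq⟩ := hT τ hτ
    have hTL : T τ ≤ L := le_of_lt (lt_of_lt_of_le hcon (min_le_left _ _))
    have hTT0 : T τ < T 0 := lt_of_lt_of_le hcon
      (le_trans (min_le_right _ _) (min_le_left _ _))
    have hTρ' : T τ < ρ' := lt_of_lt_of_le hcon
      (le_trans (min_le_right _ _) (min_le_right _ _))
    have hφsmall : φ (T τ) < δ := hLmem _ hTL
    have hψsmall : ψ (T τ + τ) < δ := heq ▸ hφsmall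
    have hTτρ' : T τ + τ < ρ' := by
      by_contra h
      push_neg at h
      exact absurd (hψlb _ h) (not_le.2 hψsmall)
    -- ψ monotone on Iio ρ' : ψ (T τ) ≤ ψ (T τ + τ)
    have hmono : ψ (T τ) ≤ ψ (T τ + τ) :=
      hψmono.monotoneOn (Set.mem_Iio.2 hTρ') (Set.mem_Iio.2 hTτρ') (by linarith)
    -- From the τ = 0 case: φ (T τ) < ψ (T τ)
    have h0 := (hT 0 le_rfl).1 (T τ) hTT0
    rw [add_zero] at h0
    linarith [heq ▸ h0]
  -- Step 4: conclude.
  rw [tendsto_atTop]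
  intro M
  -- sup bound c < κ for φ on (−∞, max A M]
  have hA : ∀ᶠ t in atBot, φ t < κ / 2 := hφbot.eventually (eventually_lt_nhds (by linarith))
  obtain ⟨A, hAmem⟩ := eventually_atBot.1 hA
  set M' : ℝ := max A M with hM'def
  have hcpt2 : IsCompact (Set.Icc A M') := isCompact_Icc
  have hne2 : (Set.Icc A M').Nonempty := ⟨A, le_refl _, le_max_left _ _⟩
  obtain ⟨y, hymem, hymax⟩ := hcpt2.exists_isMaxOn hne2 hφc.continuousOn
  set c : ℝ := max (κ / 2) (φ y) with hcdef
  have hcκ : c < κ := max_lt hhalf (hφrange y).2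
  have hφub : ∀ t, t ≤ M → φ t ≤ c := by
    intro t ht
    rcases le_or_gt t A with h | h
    · exact le_trans (le_of_lt (hAmem t h)) (le_max_left _ _)
    · exact le_trans (hymax ⟨h.le, le_trans ht (le_max_right _ _)⟩) (le_max_right _ _)
  have hS : ∀ᶠ s in atTop, c < ψ s := hψtop.eventually (eventually_gt_nhds hcκ)
  obtain ⟨S, hSmem⟩ := eventually_atTop.1 hS
  filter_upwards [eventually_ge_atTop (max 0 (S - L1))] with τ hτ
  have hτ0 : (0 : ℝ) ≤ τ := le_trans (le_max_left _ _) hτ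
  by_contra hcon
  push_neg at hcon
  obtain ⟨_, heq⟩ := hT τ hτ0
  have h1 : φ (T τ) ≤ c := hφub _ hcon.le
  have h2 : S ≤ T τ + τ := by
    have := hlb τ hτ0
    have := le_trans (le_max_right _ _) hτ
    linarith
  have h3 : c < ψ (T τ + τ) := hSmem _ h2
  linarith [heq ▸ h1]
end

section
/- Let ξ₁ < 0 < ξ₂ be the roots of z² − cz − 1 = 0 and let E : ℝ → ℝ be bounded, with E(t) ≤ 0 for t ∉ [T₁, T₁⁺] and sup_{[T₁,T₁⁺]} E =: ω. Suppose ν > 0 and ω < min{ ν ξ₂ e^{ξ₂·0}, ν e^{ξ₁(T₁⁺−T₁)} / √(c²+4), ν |ξ₁| e^{ξ₁(T₁⁺−T₁)} }, i.e. ω is small relative to ν. Then the function ℰ(t) := −∫_{−∞}^t e^{ξ₁(t−s)}E(s) ds − ∫_t^{+∞} e^{ξ₂(t−s)}E(s) ds + e^{ξ₂(t−T₁)} ν · 1_{t<T₁} + e^{ξ₁(t−T₁)} ν · 1_{t>T₁} satisfies ℰ(t) > 0 for all t ≠ T₁. -/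
open Real Set MeasureTheory

open Real Set MeasureTheory

private lemma aux_int_exp_mul (k a b : ℝ) (hk : k ≠ 0) :
    ∫ s in a..b, Real.exp (k * s) = (Real.exp (k * b) - Real.exp (k * a)) / k := by
  have hd : ∀ x : ℝ, HasDerivAt (fun s => Real.exp (k * s) / k) (Real.exp (k * x)) x := by
    intro x
    have h1 : HasDerivAt (fun s : ℝ => k * s) k x := by
      simpa using (hasDerivAt_id x).const_mul k
    have h2 := (Real.hasDerivAt_exp (k * x)).comp x h1
    have h3 := h2.div_const k
    simpa [mul_div_assoc, mul_div_cancel_right₀, hk] using h3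
  rw [intervalIntegral.integral_eq_sub_of_hasDerivAt (fun x _ => hd x)
    ((Real.continuous_exp.comp (continuous_const.mul continuous_id)).intervalIntegrable a b)]
  ring

private lemma aux_int_Icc (k t a b : ℝ) (hk : k ≠ 0) (hab : a ≤ b) :
    ∫ s in Set.Icc a b, Real.exp (k * (t - s))
      = (Real.exp (k * (t - b)) - Real.exp (k * (t - a))) / (-k) := by
  have hrw : ∀ s : ℝ, Real.exp (k * (t - s)) = Real.exp (k * t) * Real.exp ((-k) * s) := by
    intro s; rw [← Real.exp_add]; ring_nf
  rw [MeasureTheory.integral_Icc_eq_integral_Ioc, ← intervalIntegral.integral_of_le hab]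
  simp_rw [hrw]
  rw [intervalIntegral.integral_const_mul, aux_int_exp_mul (-k) a b (neg_ne_zero.mpr hk)]
  ring

private lemma aux_intOn_exp_Iic {k : ℝ} (hk : k < 0) (t : ℝ) :
    IntegrableOn (fun s => Real.exp (k * (t - s))) (Set.Iic t) := by
  have hb : (0:ℝ) < -k := by linarith
  have key : IntegrableOn (fun s => Real.exp ((-k) * s)) (Set.Iic t) := by
    refine integrableOn_Iic_of_intervalIntegral_norm_bounded
      (Real.exp ((-k) * t) / (-k)) t (fun y : ℝ => ?_) (Filter.tendsto_id (α := ℝ)) ?_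
    · exact ((Real.continuous_exp.comp (continuous_const.mul continuous_id)).integrableOn_Ioc)
    · filter_upwards with y
      have : ∀ x : ℝ, ‖Real.exp ((-k) * x)‖ = Real.exp ((-k) * x) := fun x =>
        Real.norm_of_nonneg (Real.exp_pos _).le
      simp_rw [this]
      simp only [id_eq]
      rw [aux_int_exp_mul (-k) y t (ne_of_gt hb)]
      have := (Real.exp_pos ((-k) * y)).le
      rw [div_le_div_iff₀ hb hb]
      nlinarith [Real.exp_pos ((-k) * t)]
  have h2 := key.const_mul (Real.exp (k * t))
  refine IntegrableOn.congr_fun h2 (fun s _ => ?_) measurableSet_Iic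
  rw [← Real.exp_add]; ring_nf

private lemma aux_intOn_exp_Ici {k : ℝ} (hk : 0 < k) (t : ℝ) :
    IntegrableOn (fun s => Real.exp (k * (t - s))) (Set.Ici t) := by
  have key : IntegrableOn (fun s => Real.exp (-k * s)) (Set.Ici t) := by
    rw [integrableOn_Ici_iff_integrableOn_Ioi]
    exact exp_neg_integrableOn_Ioi t hk
  have h2 := key.const_mul (Real.exp (k * t))
  refine IntegrableOn.congr_fun h2 (fun s _ => ?_) measurableSet_Ici
  rw [← Real.exp_add]; ring_nf
private lemma arithA (ν ω ξ₁ ξ₂ A B : ℝ) (hν : 0 < ν) (hξ₁0 : ξ₁ < 0) (hξ₂0 : 0 < ξ₂)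
    (hprod : -ξ₁ * ξ₂ = 1) (hω1 : ω < ν * ξ₂) (hA : 0 < A) (hB : 0 < B) (hBA : B ≤ A) :
    ω * ((B - A) * ξ₁) < A * ν := by
  have h1 : (0:ℝ) < -ξ₁ := by linarith
  rcases le_or_gt ω 0 with hω0 | hω0
  · have h2 : 0 ≤ (-ω) * ((A - B) * -ξ₁) :=
      mul_nonneg (by linarith) (mul_nonneg (by linarith) h1.le)
    nlinarith [mul_pos hA hν]
  · have h2 : ω * (A * -ξ₁) < ν * ξ₂ * (A * -ξ₁) :=
      mul_lt_mul_of_pos_right hω1 (mul_pos hA h1)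
    have h3 : ν * ξ₂ * (A * -ξ₁) = ν * A := by linear_combination ν * A * hprod
    have h4 : 0 < ω * (B * -ξ₁) := mul_pos hω0 (mul_pos hB h1)
    nlinarith
private lemma arithB (ν ω ξ₁ ξ₂ u v r : ℝ) (hν : 0 < ν) (hξ₁0 : ξ₁ < 0) (hξ₂0 : 0 < ξ₂)
    (hu : 0 < u) (hu1 : u ≤ 1) (hv : 0 < v) (hv1 : v ≤ 1) (hr : 0 < r) (hru : r ≤ u)
    (hω2 : ω * (ξ₂ + -ξ₁) < ν * r) :
    ω * ((1 - u) * ξ₂) + ω * ((v - 1) * ξ₁) < u * ν := by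
  have h1 : (0:ℝ) < -ξ₁ := by linarith
  rcases le_or_gt ω 0 with hω0 | hω0
  · have h2 : 0 ≤ (-ω) * ((1 - u) * ξ₂) :=
      mul_nonneg (by linarith) (mul_nonneg (by linarith) hξ₂0.le)
    have h3 : 0 ≤ (-ω) * ((1 - v) * -ξ₁) :=
      mul_nonneg (by linarith) (mul_nonneg (by linarith) h1.le)
    nlinarith [mul_pos hu hν]
  · have h2 : 0 ≤ ω * (u * ξ₂) := (mul_nonneg hω0.le (mul_nonneg hu.le hξ₂0.le))
    have h3 : 0 ≤ ω * (v * -ξ₁) := (mul_nonneg hω0.le (mul_nonneg hv.le h1.le))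
    have h4 : ν * r ≤ ν * u := mul_le_mul_of_nonneg_left hru hν.le
    nlinarith
private lemma arithC (ν ω ξ₁ ξ₂ p r : ℝ) (hν : 0 < ν) (hξ₁0 : ξ₁ < 0) (hξ₂0 : 0 < ξ₂)
    (hprod : -ξ₁ * ξ₂ = 1) (hω3 : ω < ν * -ξ₁ * r) (hp : 0 < p) (hr : 0 < r) (hr1 : r ≤ 1) :
    ω * ((p - p * r) * ξ₂) < p * r * ν := by
  have h1 : (0:ℝ) < -ξ₁ := by linarith
  rcases le_or_gt ω 0 with hω0 | hω0
  · have h2 : 0 ≤ (-ω) * ((p - p * r) * ξ₂) :=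
      mul_nonneg (by linarith) (mul_nonneg (by nlinarith) hξ₂0.le)
    nlinarith [mul_pos (mul_pos hp hr) hν]
  · have h2 : ω * (p * ξ₂) < ν * -ξ₁ * r * (p * ξ₂) :=
      mul_lt_mul_of_pos_right hω3 (mul_pos hp hξ₂0)
    have h3 : ν * -ξ₁ * r * (p * ξ₂) = ν * r * p := by linear_combination ν * r * p * hprod
    have h4 : 0 ≤ ω * (p * r * ξ₂) := mul_nonneg hω0.le (mul_nonneg (mul_pos hp hr).le hξ₂0.le)
    nlinarith
/-- Positivity of the combination ℰ of the Green-kernel integrals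
of the defect E (nonpositive off [T₁,T₁⁺], with supremum ω there) and the jump
terms of size ν at T₁, provided ω is small relative to ν. -/
theorem stmt_17 (c ν ω T₁ T₁p : ℝ) (hν : 0 < ν) (hTle : T₁ ≤ T₁p)
    (ξ₁ ξ₂ : ℝ) (hξ₁ : ξ₁ = (c - Real.sqrt (c ^ 2 + 4)) / 2)
    (hξ₂ : ξ₂ = (c + Real.sqrt (c ^ 2 + 4)) / 2)
    (E : ℝ → ℝ) (hEmeas : Continuous E) (K : ℝ) (hEbdd : ∀ t, |E t| ≤ K)
    (hEneg : ∀ t, t ∉ Set.Icc T₁ T₁p → E t ≤ 0)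
    (hEsup : ∀ t ∈ Set.Icc T₁ T₁p, E t ≤ ω)
    (hω : ω < min (ν * ξ₂)
      (min (ν * Real.exp (ξ₁ * (T₁p - T₁)) / Real.sqrt (c ^ 2 + 4))
           (ν * |ξ₁| * Real.exp (ξ₁ * (T₁p - T₁)))))
    (ℰ : ℝ → ℝ)
    (hℰ : ℰ = fun t =>
      -(∫ s in Set.Iic t, Real.exp (ξ₁ * (t - s)) * E s)
      - (∫ s in Set.Ici t, Real.exp (ξ₂ * (t - s)) * E s)
      + (if t < T₁ then Real.exp (ξ₂ * (t - T₁)) * ν else 0)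
      + (if T₁ < t then Real.exp (ξ₁ * (t - T₁)) * ν else 0)) :
    ∀ t : ℝ, t ≠ T₁ → 0 < ℰ t := by
  subst hℰ
  have hd0 : 0 < Real.sqrt (c ^ 2 + 4) := Real.sqrt_pos.mpr (by positivity)
  have habs : |c| < Real.sqrt (c ^ 2 + 4) := by
    rw [← Real.sqrt_sq_eq_abs]
    exact Real.sqrt_lt_sqrt (sq_nonneg c) (by linarith)
  have hc1 : c ≤ |c| := le_abs_self c
  have hc2 : -c ≤ |c| := neg_le_abs c
  have hξ₁0 : ξ₁ < 0 := by rw [hξ₁]; linarith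
  have hξ₂0 : 0 < ξ₂ := by rw [hξ₂]; linarith
  have hsq : Real.sqrt (c ^ 2 + 4) ^ 2 = c ^ 2 + 4 :=
    Real.sq_sqrt (by positivity)
  have hprod : (-ξ₁) * ξ₂ = 1 := by rw [hξ₁, hξ₂]; nlinarith [hsq]
  have hdsum : Real.sqrt (c ^ 2 + 4) = ξ₂ + (-ξ₁) := by rw [hξ₁, hξ₂]; ring
  have hdiv1 : ∀ x : ℝ, x / (-ξ₁) = x * ξ₂ := by
    intro x
    rw [div_eq_iff (by linarith : (-ξ₁) ≠ 0)]
    linear_combination (-x) * hprod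
  have hdiv2 : ∀ x : ℝ, x / (-ξ₂) = x * ξ₁ := by
    intro x
    rw [div_eq_iff (by linarith : (-ξ₂) ≠ 0)]
    linear_combination (-x) * hprod
  have hω1 : ω < ν * ξ₂ := lt_of_lt_of_le hω (min_le_left _ _)
  have hω2 : ω * Real.sqrt (c ^ 2 + 4) < ν * Real.exp (ξ₁ * (T₁p - T₁)) := by
    have := lt_of_lt_of_le hω ((min_le_right _ _).trans (min_le_left _ _))
    exact (lt_div_iff₀ hd0).mp this
  have hω3 : ω < ν * (-ξ₁) * Real.exp (ξ₁ * (T₁p - T₁)) := by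
    have := lt_of_lt_of_le hω ((min_le_right _ _).trans (min_le_right _ _))
    rwa [abs_of_neg hξ₁0] at this
  intro t ht
  -- integrability of the integrands
  have hiGen : ∀ (k : ℝ) (S : Set ℝ), IntegrableOn (fun s => Real.exp (k * (t - s))) S →
      IntegrableOn (fun s => Real.exp (k * (t - s)) * E s) S := by
    intro k S he
    refine (he.mul_const K).mono ?_ (Filter.Eventually.of_forall fun s => ?_)
    · exact ((Real.continuous_exp.comp
        (continuous_const.mul (continuous_const.sub continuous_id))).mul hEmeas).aestronglyMeasurable
    · rw [norm_mul, norm_mul]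
      exact mul_le_mul_of_nonneg_left
        ((Real.norm_eq_abs (E s) ▸ hEbdd s).trans (le_abs_self K)) (norm_nonneg _)
  have hi₁ : IntegrableOn (fun s => Real.exp (ξ₁ * (t - s)) * E s) (Set.Iic t) :=
    hiGen ξ₁ _ (aux_intOn_exp_Iic hξ₁0 t)
  have hi₂ : IntegrableOn (fun s => Real.exp (ξ₂ * (t - s)) * E s) (Set.Ici t) :=
    hiGen ξ₂ _ (aux_intOn_exp_Ici hξ₂0 t)
  -- indicator majorant
  have hind : ∀ k : ℝ,
      Integrable (Set.indicator (Set.Icc T₁ T₁p) (fun s => ω * Real.exp (k * (t - s)))) := by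
    intro k
    refine IntegrableOn.integrable_indicator ?_ measurableSet_Icc
    exact Continuous.integrableOn_Icc (by fun_prop)
  have hmaj : ∀ (k : ℝ) (s : ℝ), Real.exp (k * (t - s)) * E s ≤
      Set.indicator (Set.Icc T₁ T₁p) (fun s => ω * Real.exp (k * (t - s))) s := by
    intro k s
    by_cases hs : s ∈ Set.Icc T₁ T₁p
    · rw [Set.indicator_of_mem hs]
      nlinarith [Real.exp_pos (k * (t - s)), hEsup s hs]
    · rw [Set.indicator_of_notMem hs]
      nlinarith [Real.exp_pos (k * (t - s)), hEneg s hs]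
  have hI₁le : (∫ s in Set.Iic t, Real.exp (ξ₁ * (t - s)) * E s)
      ≤ ∫ s in Set.Iic t ∩ Set.Icc T₁ T₁p, ω * Real.exp (ξ₁ * (t - s)) := by
    rw [← MeasureTheory.setIntegral_indicator measurableSet_Icc]
    exact MeasureTheory.setIntegral_mono_on hi₁ ((hind ξ₁).integrableOn)
      measurableSet_Iic (fun s _ => hmaj ξ₁ s)
  have hI₂le : (∫ s in Set.Ici t, Real.exp (ξ₂ * (t - s)) * E s)
      ≤ ∫ s in Set.Ici t ∩ Set.Icc T₁ T₁p, ω * Real.exp (ξ₂ * (t - s)) := by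
    rw [← MeasureTheory.setIntegral_indicator measurableSet_Icc]
    exact MeasureTheory.setIntegral_mono_on hi₂ ((hind ξ₂).integrableOn)
      measurableSet_Ici (fun s _ => hmaj ξ₂ s)
  rcases lt_or_gt_of_ne ht with htlt | htgt
  · -- t < T₁
    have hI₁ : (∫ s in Set.Iic t, Real.exp (ξ₁ * (t - s)) * E s) ≤ 0 := by
      refine MeasureTheory.setIntegral_nonpos measurableSet_Iic (fun s hs => ?_)
      have hsn : s ∉ Set.Icc T₁ T₁p := by
        simp only [Set.mem_Icc, not_and_or, not_le]
        left; exact lt_of_le_of_lt hs htlt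
      exact mul_nonpos_iff.mpr (Or.inl ⟨(Real.exp_pos _).le, hEneg s hsn⟩)
    have hset : Set.Ici t ∩ Set.Icc T₁ T₁p = Set.Icc T₁ T₁p :=
      Set.inter_eq_self_of_subset_right (fun s hs => le_trans htlt.le hs.1)
    have hval : (∫ s in Set.Ici t ∩ Set.Icc T₁ T₁p, ω * Real.exp (ξ₂ * (t - s)))
        = ω * ((Real.exp (ξ₂ * (t - T₁p)) - Real.exp (ξ₂ * (t - T₁))) * ξ₁) := by
      rw [hset, MeasureTheory.integral_const_mul,
        aux_int_Icc ξ₂ t T₁ T₁p (ne_of_gt hξ₂0) hTle, hdiv2]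
    have hI₂ := hI₂le.trans_eq hval
    simp only [if_pos htlt, if_neg (not_lt.mpr (le_of_lt htlt))]
    have hA : 0 < Real.exp (ξ₂ * (t - T₁)) := Real.exp_pos _
    have hB : 0 < Real.exp (ξ₂ * (t - T₁p)) := Real.exp_pos _
    have hBA : Real.exp (ξ₂ * (t - T₁p)) ≤ Real.exp (ξ₂ * (t - T₁)) :=
      Real.exp_le_exp.mpr (mul_le_mul_of_nonneg_left (by linarith) hξ₂0.le)
    have key := arithA ν ω ξ₁ ξ₂ _ _ hν hξ₁0 hξ₂0 hprod hω1 hA hB hBA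
    linarith [hI₁, hI₂, key]
  · -- T₁ < t
    rcases le_or_gt t T₁p with htle | htgt2
    · -- T₁ < t ≤ T₁p
      have hset1 : Set.Iic t ∩ Set.Icc T₁ T₁p = Set.Icc T₁ t := by
        ext s
        simp only [Set.mem_inter_iff, Set.mem_Iic, Set.mem_Icc]
        constructor
        · rintro ⟨h1, h2, _⟩; exact ⟨h2, h1⟩
        · rintro ⟨h1, h2⟩; exact ⟨h2, h1, le_trans h2 htle⟩
      have hset2 : Set.Ici t ∩ Set.Icc T₁ T₁p = Set.Icc t T₁p := by
        ext s
        simp only [Set.mem_inter_iff, Set.mem_Ici, Set.mem_Icc]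
        constructor
        · rintro ⟨h1, _, h3⟩; exact ⟨h1, h3⟩
        · rintro ⟨h1, h2⟩; exact ⟨h1, le_trans htgt.le h1, h2⟩
      have hzero : ξ₁ * (t - t) = 0 := by ring
      have hval1 : (∫ s in Set.Iic t ∩ Set.Icc T₁ T₁p, ω * Real.exp (ξ₁ * (t - s)))
          = ω * ((1 - Real.exp (ξ₁ * (t - T₁))) * ξ₂) := by
        rw [hset1, MeasureTheory.integral_const_mul,
          aux_int_Icc ξ₁ t T₁ t (ne_of_lt hξ₁0) htgt.le, hzero, Real.exp_zero, hdiv1]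
      have hval2 : (∫ s in Set.Ici t ∩ Set.Icc T₁ T₁p, ω * Real.exp (ξ₂ * (t - s)))
          = ω * ((Real.exp (ξ₂ * (t - T₁p)) - 1) * ξ₁) := by
        have hzero2 : ξ₂ * (t - t) = 0 := by ring
        rw [hset2, MeasureTheory.integral_const_mul,
          aux_int_Icc ξ₂ t t T₁p (ne_of_gt hξ₂0) htle, hzero2, Real.exp_zero, hdiv2]
      have hI₁ := hI₁le.trans_eq hval1
      have hI₂ := hI₂le.trans_eq hval2
      simp only [if_pos htgt, if_neg (not_lt.mpr (le_of_lt htgt))]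
      have hu : 0 < Real.exp (ξ₁ * (t - T₁)) := Real.exp_pos _
      have hu1 : Real.exp (ξ₁ * (t - T₁)) ≤ 1 := Real.exp_le_one_iff.mpr (mul_nonpos_iff.mpr (Or.inr ⟨hξ₁0.le, by linarith⟩))
      have hv : 0 < Real.exp (ξ₂ * (t - T₁p)) := Real.exp_pos _
      have hv1 : Real.exp (ξ₂ * (t - T₁p)) ≤ 1 := Real.exp_le_one_iff.mpr (mul_nonpos_iff.mpr (Or.inl ⟨hξ₂0.le, by linarith⟩))
      have hru : Real.exp (ξ₁ * (T₁p - T₁)) ≤ Real.exp (ξ₁ * (t - T₁)) :=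
        Real.exp_le_exp.mpr (mul_le_mul_of_nonpos_left (by linarith) hξ₁0.le)
      have hr : 0 < Real.exp (ξ₁ * (T₁p - T₁)) := Real.exp_pos _
      rw [hdsum] at hω2
      have key := arithB ν ω ξ₁ ξ₂ _ _ _ hν hξ₁0 hξ₂0 hu hu1 hv hv1 hr hru hω2
      linarith [hI₁, hI₂, key]
    · -- T₁p < t
      have hI₂ : (∫ s in Set.Ici t, Real.exp (ξ₂ * (t - s)) * E s) ≤ 0 := by
        refine MeasureTheory.setIntegral_nonpos measurableSet_Ici (fun s hs => ?_)
        have hsn : s ∉ Set.Icc T₁ T₁p := by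
          simp only [Set.mem_Icc, not_and_or, not_le]
          right; exact lt_of_lt_of_le htgt2 hs
        exact mul_nonpos_iff.mpr (Or.inl ⟨(Real.exp_pos _).le, hEneg s hsn⟩)
      have hset : Set.Iic t ∩ Set.Icc T₁ T₁p = Set.Icc T₁ T₁p :=
        Set.inter_eq_self_of_subset_right (fun s hs => le_trans hs.2 htgt2.le)
      have hval : (∫ s in Set.Iic t ∩ Set.Icc T₁ T₁p, ω * Real.exp (ξ₁ * (t - s)))
          = ω * ((Real.exp (ξ₁ * (t - T₁p)) - Real.exp (ξ₁ * (t - T₁))) * ξ₂) := by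
        rw [hset, MeasureTheory.integral_const_mul,
          aux_int_Icc ξ₁ t T₁ T₁p (ne_of_lt hξ₁0) hTle, hdiv1]
      have hI₁ := hI₁le.trans_eq hval
      simp only [if_pos htgt, if_neg (not_lt.mpr (le_of_lt htgt))]
      have hp : 0 < Real.exp (ξ₁ * (t - T₁p)) := Real.exp_pos _
      have hq : Real.exp (ξ₁ * (t - T₁))
          = Real.exp (ξ₁ * (t - T₁p)) * Real.exp (ξ₁ * (T₁p - T₁)) := by
        rw [← Real.exp_add]; congr 1; ring
      have hr : 0 < Real.exp (ξ₁ * (T₁p - T₁)) := Real.exp_pos _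
      have hr1 : Real.exp (ξ₁ * (T₁p - T₁)) ≤ 1 := Real.exp_le_one_iff.mpr (mul_nonpos_iff.mpr (Or.inr ⟨hξ₁0.le, by linarith⟩))
      rw [hq]
      rw [hq] at hI₁
      have key := arithC ν ω ξ₁ ξ₂ _ _ hν hξ₁0 hξ₂0 hprod hω3 hp hr hr1
      linarith [hI₁, hI₂, key]
end
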